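/- The classical Hawk–Dove game (2×2 symmetric game with payoff matrix [[ (V-C)/2, V ], [ 0, V/2 ]] where 0 < V < C) has no strategy that is evolutionarily stable against multiple mutations. -/

import Mathlib

open Finset Set

noncomputable section

/-- The probability simplex in ℝᵏ. -/
def Δ' (k : ℕ) : Set (Fin k → ℝ) := stdSimplex ℝ (Fin k)

/-- Affine payoff determined by the matrix `U`. -/
def payoff {k : ℕ} (U : Fin k → Fin k → ℝ) (p q : Fin k → ℝ) : ℝ :=
  ∑ i, ∑ j, p i * q j * U i j

/-- The pure strategy `eⁱ`. -/
def pure' {k : ℕ} (i : Fin k) : Fin k → ℝ := fun j => if j = i then 1 else 0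

/-- Population state when mutations `r i` appear in proportions `ε i` against incumbent `p`. -/
def mix {k m : ℕ} (p : Fin k → ℝ) (r : Fin m → Fin k → ℝ) (ε : Fin m → ℝ) : Fin k → ℝ :=
  fun j => (∑ i, ε i * r i j) + (1 - ∑ i, ε i) * p j

/-- Evolutionarily stable strategy (ESS). -/
def IsESS {k : ℕ} (U : Fin k → Fin k → ℝ) (p : Fin k → ℝ) : Prop :=
  p ∈ Δ' k ∧ ∀ r ∈ Δ' k, r ≠ p → ∃ e ∈ Set.Ioo (0:ℝ) 1, ∀ ε : ℝ, 0 < ε → ε ≤ e →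
    payoff U p (fun j => ε * r j + (1 - ε) * p j) >
      payoff U r (fun j => ε * r j + (1 - ε) * p j)

/-- Evolutionary stability against `m` mutations. -/
def StableAgainst {k : ℕ} (U : Fin k → Fin k → ℝ) (m : ℕ) (p : Fin k → ℝ) : Prop :=
  ∀ r : Fin m → Fin k → ℝ, (∀ i, r i ∈ Δ' k) → (∀ i, r i ≠ p) →
    ∃ e ∈ Set.Ioo (0:ℝ) 1, ∀ ε : Fin m → ℝ, (∀ i, ε i ∈ Set.Ioc (0:ℝ) e) →
      ∀ i, payoff U p (mix p r ε) > payoff U (r i) (mix p r ε)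

/-- `e` is a uniform invasion barrier for `p` against `m` mutations. -/
def UniformBarrier {k : ℕ} (U : Fin k → Fin k → ℝ) (m : ℕ) (p : Fin k → ℝ) (e : ℝ) : Prop :=
  ∀ r : Fin m → Fin k → ℝ, (∀ i, r i ∈ Δ' k) → (∀ i, r i ≠ p) →
    ∀ ε : Fin m → ℝ, (∀ i, ε i ∈ Set.Ioc (0:ℝ) e) →
      ∀ i, payoff U p (mix p r ε) > payoff U (r i) (mix p r ε)

/-- Best responses to `p`. -/
def BR {k : ℕ} (U : Fin k → Fin k → ℝ) (p : Fin k → ℝ) : Set (Fin k → ℝ) :=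
  {q ∈ Δ' k | ∀ r ∈ Δ' k, payoff U r p ≤ payoff U q p}

/-- Local dominance. -/
def LocallyDominant {k : ℕ} (U : Fin k → Fin k → ℝ) (p : Fin k → ℝ) : Prop :=
  ∃ V ∈ nhdsWithin p (Δ' k), V ⊆ Δ' k ∧ ∀ s ∈ V, s ≠ p → ∀ r ∈ V, r ≠ p →
    payoff U p r ≥ payoff U s r ∧ payoff U p r > payoff U r r

/-- Strict local dominance. -/
def StrictlyLocallyDominant {k : ℕ} (U : Fin k → Fin k → ℝ) (p : Fin k → ℝ) : Prop :=
  ∃ V ∈ nhdsWithin p (Δ' k), V ⊆ Δ' k ∧ ∀ s ∈ V, s ≠ p → ∀ r ∈ V, r ≠ p →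
    payoff U p r > payoff U s r

/-!
A strategy stable against multiple mutations must be pure. If every coordinate of `p` is
positive, let the pure strategies invade in proportions `e • p`: the population state is then
still `p`, and `p` earns against it the `p`-weighted average of what the pure strategies earn,
so it cannot beat all of them. A pure strategy, on the other hand, is invaded by any strictly
better reply to itself, and in Hawk–Dove neither Hawk nor Dove is a best reply to itself.
-/

lemma pure'_eq_single {k : ℕ} (i : Fin k) : pure' i = Pi.single i 1 := by
  ext j
  simp [pure', Pi.single_apply]

lemma pure'_mem_Δ' {k : ℕ} (i : Fin k) : pure' i ∈ Δ' k := by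
  rw [pure'_eq_single]
  exact single_mem_stdSimplex ℝ i

lemma pure'_ne_of_forall_pos {k : ℕ} (hk : 2 ≤ k) {p : Fin k → ℝ} (hpos : ∀ j, 0 < p j)
    (i : Fin k) : pure' i ≠ p := by
  have : Nontrivial (Fin k) := Fin.nontrivial_iff_two_le.mpr hk
  obtain ⟨j, hji⟩ := exists_ne i
  intro h
  have := hpos j
  simp [← h, pure', hji] at this

lemma payoff_eq_sum_pure' {k : ℕ} (U : Fin k → Fin k → ℝ) (p q : Fin k → ℝ) :
    payoff U p q = ∑ i, p i * payoff U (pure' i) q := by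
  simp [payoff, pure', ite_mul, Finset.mul_sum, mul_assoc]

lemma mix_pure'_scaled {k : ℕ} {p : Fin k → ℝ} (hp : p ∈ Δ' k) (e : ℝ) :
    mix p pure' (fun i => e * p i) = p := by
  have hsum : ∑ i, p i = 1 := hp.2
  ext j
  simp only [mix, pure', mul_ite, mul_one, mul_zero, sum_ite_eq, Finset.mem_univ, ↓reduceIte,
    ← mul_sum, hsum]
  ring

lemma mix_zero {k m : ℕ} (p : Fin k → ℝ) (r : Fin m → Fin k → ℝ) : mix p r 0 = p := by
  ext j
  simp [mix]

lemma continuous_payoff_mix_const {k m : ℕ} (U : Fin k → Fin k → ℝ) (p q r : Fin k → ℝ) :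
    Continuous fun δ : ℝ => payoff U q (mix p (fun _ : Fin m => r) fun _ => δ) := by
  simp only [payoff, mix]
  continuity

theorem not_stableAgainst_of_forall_pos {k : ℕ} (U : Fin k → Fin k → ℝ) {p : Fin k → ℝ}
    (hp : p ∈ Δ' k) (hk : 2 ≤ k) (hpos : ∀ i, 0 < p i) : ¬ StableAgainst U k p := by
  intro hstable
  obtain ⟨e, ⟨he0, -⟩, hbarrier⟩ :=
    hstable pure' pure'_mem_Δ' (pure'_ne_of_forall_pos hk hpos)
  have hε : ∀ i, e * p i ∈ Ioc 0 e := fun i =>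
    ⟨mul_pos he0 (hpos i), mul_le_of_le_one_right he0.le (mem_Icc_of_mem_stdSimplex hp i).2⟩
  have hbeat := hbarrier _ hε
  rw [mix_pure'_scaled hp] at hbeat
  refine lt_irrefl (payoff U p p) ?_
  calc payoff U p p = ∑ i, p i * payoff U (pure' i) p := payoff_eq_sum_pure' U p p
    _ < ∑ i, p i * payoff U p p := by
      have : Nonempty (Fin k) := ⟨⟨0, by omega⟩⟩
      exact Finset.sum_lt_sum_of_nonempty univ_nonempty
        fun i _ => mul_lt_mul_of_pos_left (hbeat i) (hpos i)
    _ = payoff U p p := by rw [← Finset.sum_mul, hp.2, one_mul]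

theorem not_stableAgainst_of_payoff_lt {k m : ℕ} (U : Fin k → Fin k → ℝ) {p r : Fin k → ℝ}
    (hm : 0 < m) (hr : r ∈ Δ' k) (hrp : r ≠ p) (hbetter : payoff U p p < payoff U r p) :
    ¬ StableAgainst U m p := by
  intro hstable
  obtain ⟨e, ⟨he0, -⟩, hbarrier⟩ := hstable (fun _ => r) (fun _ => hr) (fun _ => hrp)
  let f : ℝ → ℝ := fun δ => payoff U r (mix p (fun _ : Fin m => r) fun _ => δ) -
    payoff U p (mix p (fun _ : Fin m => r) fun _ => δ)
  have hf : Continuous f :=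
    (continuous_payoff_mix_const U p r r).sub (continuous_payoff_mix_const U p p r)
  have hf0 : 0 < f 0 := by
    simpa [f, ← Pi.zero_def, mix_zero] using hbetter
  obtain ⟨δ, hfδ, hδ⟩ : ∃ δ, 0 < f δ ∧ δ ∈ Ioc 0 e :=
    (((hf.continuousAt.eventually (lt_mem_nhds hf0)).filter_mono nhdsWithin_le_nhds).and
      (Ioc_mem_nhdsGT he0)).exists
  have := hbarrier (fun _ => δ) (fun _ => hδ) ⟨0, hm⟩
  simp only [f] at hfδ
  linarith

theorem stmt_17 (V C : ℝ) (hV : 0 < V) (hVC : V < C) :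
    let U : Fin 2 → Fin 2 → ℝ := ![![(V - C)/2, V], ![0, V/2]]
    ∀ p ∈ Δ' 2, ¬ (∀ m : ℕ, 2 ≤ m → StableAgainst U m p) := by
  intro U p hp hstable
  have hsum : p 0 + p 1 = 1 := by simpa [Fin.sum_univ_two] using hp.2
  rcases (hp.1 0).eq_or_lt with h0 | h0
  · -- `p` is Dove, and Hawk is a strictly better reply to it
    have h1 : p 1 = 1 := by linarith
    refine not_stableAgainst_of_payoff_lt U two_pos (pure'_mem_Δ' 0)
      (fun h => by simpa [pure', ← h0] using congrFun h 0) ?_ (hstable 2 le_rfl)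
    simp [U, payoff, pure', Fin.sum_univ_two, ← h0, h1]
    linarith
  rcases (hp.1 1).eq_or_lt with h1 | h1
  · -- `p` is Hawk, and Dove is a strictly better reply to it
    have h0 : p 0 = 1 := by linarith
    refine not_stableAgainst_of_payoff_lt U two_pos (pure'_mem_Δ' 1)
      (fun h => by simpa [pure', ← h1] using congrFun h 1) ?_ (hstable 2 le_rfl)
    simp [U, payoff, pure', Fin.sum_univ_two, ← h1, h0]
    linarith
  exact not_stableAgainst_of_forall_pos U hp le_rfl (Fin.forall_fin_two.2 ⟨h0, h1⟩)
    (hstable 2 le_rfl)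

end
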